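/- arXiv:1703.10203 — 3 statements merged into one kernel-verified Lean document; each statement's English description precedes it below -/
import Mathlib

section
/- Let X be a smooth projective surface over ℂ with numerically trivial canonical bundle, L an ample line bundle with (L²) > (8/7)(p+2)² for a natural number p, and x ∈ X a very general point. If every irreducible curve F through x with multiplicity m = mult_x(F) ≥ 2 satisfies (F²) ≥ m² − m + 2, and there is no curve F through x with (F²) = 0 and 1 ≤ (L·F) ≤ p+2, then the Seshadri constant satisfies ε(L;x) > p+2. -/
/-- Let `X` be a smooth projective surface over `ℂ` with numerically trivial
canonical bundle, `L` ample with `(L²) > (8/7)(p+2)²`, and `x ∈ X` very general. The irreducible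
curves through `x` are modelled by a type `Curves` with `L`-degree `deg C = (L·C) ≥ 1` (`L` is
ample), multiplicity `mult C = mult_x(C) ≥ 1` and self-intersection `selfInt C = (C²) ≥ 0`
(a very general point lies on no negative curve), subject to the Hodge index inequality
`(L·C)² ≥ (L²)(C²)`. The Seshadri constant `ε = ε(L;x)` is the infimum of `(L·C)/mult_x(C)`: it
is bounded by every such ratio, satisfies `ε ≤ √(L²)`, and is either maximal (`ε = √(L²)`) or
computed by a Seshadri exceptional curve. If every curve through `x` with `m = mult_x(C) ≥ 2`
satisfies `(C²) ≥ m² − m + 2` (Knutsen–Syzdek–Szemberg, `X` not uniruled), and there is no curve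
`F` through `x` with `(F²) = 0` and `1 ≤ (L·F) ≤ p+2`, then `ε(L;x) > p+2`. -/
theorem stmt3 (p : ℕ) (L2 : ℤ) (hL2 : (8 / 7 : ℝ) * ((p : ℝ) + 2) ^ 2 < (L2 : ℝ))
    (Curves : Type*) (deg : Curves → ℤ) (mult : Curves → ℕ) (selfInt : Curves → ℤ)
    (hdeg : ∀ C, 1 ≤ deg C)                     -- L ample
    (hmult : ∀ C, 1 ≤ mult C)                   -- curves through x
    (hneg : ∀ C, 0 ≤ selfInt C)                 -- x very general: no negative curves through x
    (hodge : ∀ C, L2 * selfInt C ≤ (deg C) ^ 2) -- Hodge index theorem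
    (hKSS : ∀ C, 2 ≤ mult C → (mult C : ℤ) ^ 2 - mult C + 2 ≤ selfInt C)  -- KSS theorem
    (hnoell : ¬ ∃ C, selfInt C = 0 ∧ 1 ≤ deg C ∧ deg C ≤ (p : ℤ) + 2)
    (ε : ℝ)
    (hεle : ∀ C, ε ≤ (deg C : ℝ) / (mult C : ℝ))   -- ε is a lower bound of the ratios
    (hεmax : ε ≤ Real.sqrt (L2 : ℝ))
    (hεattain : ε = Real.sqrt (L2 : ℝ) ∨ ∃ C, ε = (deg C : ℝ) / (mult C : ℝ)) :
    (p : ℝ) + 2 < ε := by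
  have hp2 : (0:ℝ) ≤ (p:ℝ) + 2 := by positivity
  have hL2pos : (0:ℝ) < (L2:ℝ) := lt_of_le_of_lt (by positivity) hL2
  have key : ∀ C, (p : ℝ) + 2 < (deg C : ℝ) / (mult C : ℝ) := by
    intro C
    have hm1 := hmult C
    have hmpos : (0:ℝ) < (mult C : ℝ) := by exact_mod_cast Nat.lt_of_lt_of_le Nat.zero_lt_one hm1
    have hdpos : (0:ℝ) < (deg C : ℝ) := by exact_mod_cast lt_of_lt_of_le Int.zero_lt_one (hdeg C)
    have hodgeR : (L2:ℝ) * (selfInt C : ℝ) ≤ (deg C : ℝ)^2 := by exact_mod_cast hodge C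
    rw [lt_div_iff₀ hmpos]
    rcases Nat.lt_or_ge (mult C) 2 with h2 | h2
    · have hm : (mult C : ℝ) = 1 := by
        have : mult C = 1 := le_antisymm (Nat.lt_succ_iff.mp h2) hm1
        rw [this]; norm_num
      rw [hm, mul_one]
      rcases eq_or_lt_of_le (hneg C) with hs0 | hs1
      · have hd3 : (p:ℤ) + 3 ≤ deg C := by
          by_contra h
          push_neg at h
          exact hnoell ⟨C, hs0.symm, hdeg C, by omega⟩
        have : (p:ℝ) + 3 ≤ (deg C : ℝ) := by exact_mod_cast hd3
        linarith
      · have hs1' : (1:ℝ) ≤ (selfInt C : ℝ) := by exact_mod_cast hs1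
        nlinarith [sq_nonneg ((deg C:ℝ) - ((p:ℝ)+2))]
    · have hKSSR : ((mult C : ℝ))^2 - (mult C : ℝ) + 2 ≤ (selfInt C : ℝ) := by
        exact_mod_cast hKSS C h2
      have hm2 : (2:ℝ) ≤ (mult C : ℝ) := by exact_mod_cast h2
      nlinarith [sq_nonneg ((mult C:ℝ) - 4), sq_nonneg ((deg C:ℝ) - ((p:ℝ)+2) * (mult C:ℝ)),
        sq_nonneg ((p:ℝ)+2), mul_pos hmpos hmpos]
  rcases hεattain with h | ⟨C, h⟩
  · rw [h]
    have : ((p:ℝ)+2)^2 < (L2:ℝ) := by nlinarith [sq_nonneg ((p:ℝ)+2)]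
    calc (p:ℝ)+2 = Real.sqrt (((p:ℝ)+2)^2) := (Real.sqrt_sq hp2).symm
      _ < Real.sqrt (L2:ℝ) := Real.sqrt_lt_sqrt (by positivity) this
  · rw [h]; exact key C
end

section
/- Let C be a smooth projective curve of genus g on a K3 surface X lying in an ample linear system |L| with (L²) > (1/4)(p+6)². Suppose C = F + P with F effective nontrivial, P ℚ-effective, a := (F²) ≥ 0, b := (P²) > a, e := (F·P) satisfying 0 < e ≤ d ≤ p+2 and a ≤ d. If a > 0 then, using e² ≥ ab (Hodge index), one gets (C²) = a + b + 2e ≤ a + (p+2)²/a + 2(p+2), which combined with (C²) > (1/4)(p+6)² forces a ≤ 3; since the intersection form on a K3 surface is even, a = 2. -/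
/-- (Numerical core of Theorem 4.4(b).) Let `C = F + P` be a decomposition of a
smooth curve `C ∈ |L|` on a K3 surface with `(L²) > (1/4)(p+6)²`, and set `a = (F²)`, `b = (P²)`,
`e = (F·P)`, all integers, with `0 < a`, `a ≤ d`, `b > a`, `0 < e ≤ d ≤ p+2` and the Hodge index
inequality `e² ≥ ab`. Since `(C²) = a + b + 2e > (1/4)(p+6)²` one gets `a ≤ 3`, and since the
intersection form of a K3 surface is even (`a` is even), `a = 2`. -/
theorem stmt9 (p : ℕ) (a b e d C2 : ℤ)
    (ha : 0 < a) (had : a ≤ d) (hba : a < b) (he : 0 < e) (hed : e ≤ d)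
    (hd : d ≤ (p : ℤ) + 2) (hodge : a * b ≤ e ^ 2) (hC2 : C2 = a + b + 2 * e)
    (hC2big : ((p : ℤ) + 6) ^ 2 < 4 * C2) (heven : Even a) :
    a ≤ 3 ∧ a = 2 := by
  subst hC2
  set q : ℤ := (p : ℤ) + 2 with hq
  have haq : a ≤ q := had.trans hd
  have heq : e ≤ q := hed.trans hd
  have hq2 : (2 : ℤ) ≤ q := by omega
  have ha3 : a ≤ 3 := by
    by_contra h
    push_neg at h
    have h4 : 4 ≤ a := h
    -- a*(p+6)^2 < 4*a*C2 ≤ (2a+2e)^2 ≤ (2a+2q)^2 ≤ a*(q+4)^2 = a*(p+6)^2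
    have h1 : a * ((p : ℤ) + 6) ^ 2 < 4 * a * (a + b + 2 * e) := by nlinarith
    have h2 : 4 * a * (a + b + 2 * e) ≤ (2 * a + 2 * e) ^ 2 := by nlinarith
    have h3 : (2 * a + 2 * e) ^ 2 ≤ (2 * a + 2 * q) ^ 2 := by nlinarith
    have h5 : (2 * a + 2 * q) ^ 2 ≤ a * (q + 4) ^ 2 := by nlinarith [mul_nonneg (sub_nonneg.2 h4) (sub_nonneg.2 (by nlinarith : 4 * a ≤ q ^ 2))]
    have : ((p : ℤ) + 6) = q + 4 := by ring
    rw [this] at h1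
    omega
  refine ⟨ha3, ?_⟩
  obtain ⟨k, hk⟩ := heven
  omega
end

section
/- Let X be a K3 surface and L ample with (L²) > (1/2)(p+4)². Assuming (i) every smooth C ∈ |L| satisfies Cliff(C) = gon(C) − 2 (no Clifford-exceptional configuration, valid since L is ample), (ii) Green's conjecture holds for smooth curves on K3 surfaces, and (iii) a gonality pencil of degree ≤ p+2 on C extends to an elliptic fibration of X (Serrano): if (X,L) fails property (N_p), then there exists a smooth elliptic curve F ⊆ X with (F²) = 0 and 1 ≤ (L·F) ≤ p+2. -/
/-- Let `X` be a K3 surface (divisor classes a `ℤ`-module with bilinear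
intersection form) and `L` ample with `(L²) > (1/2)(p+4)²`. Fix a smooth curve `C ∈ |L|` with
Clifford index `Cliff` and gonality `gon`. Assume: (i) `Cliff = gon − 2` (no Clifford
exceptional configuration; valid as `L` is ample); (ii) Green's conjecture for smooth curves on
K3 surfaces, which together with the Lefschetz theorem gives that `(X,L)` has `(N_p)` iff
`p < Cliff`; (iii) Serrano's extension theorem: a gonality pencil of degree `≤ p+2` on `C`
extends to an elliptic fibration of `X`, producing a smooth elliptic curve `F` with `(F²) = 0`
and `(L·F) = gon`. Then: if `(X,L)` fails property `(N_p)`, there is a smooth elliptic curve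
`F ⊆ X` with `(F²) = 0` and `1 ≤ (L·F) ≤ p+2`. -/
theorem stmt15 {Div : Type*} [AddCommGroup Div] [Module ℤ Div]
    (inter : Div →ₗ[ℤ] Div →ₗ[ℤ] ℤ)
    (hsymm : ∀ A B : Div, inter A B = inter B A)
    (SmoothElliptic : Div → Prop) (Np : Prop)
    (p : ℕ) (L : Div) (Ample : Div → Prop) (hL : Ample L)
    (hL2 : ((p : ℚ) + 4) ^ 2 / 2 < (inter L L : ℚ))
    (Cliff gon : ℤ)
    (hCliffGon : Cliff = gon - 2)                         -- (i)
    (hGreen : Np ↔ (p : ℤ) < Cliff)                       -- (ii) + Lefschetz/Aprodu–Farkas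
    (hSerrano : gon ≤ (p : ℤ) + 2 →                       -- (iii) Serrano extension
      ∃ F : Div, SmoothElliptic F ∧ inter F F = 0 ∧ inter L F = gon ∧ 1 ≤ inter L F) :
    ¬ Np → ∃ F : Div, SmoothElliptic F ∧ inter F F = 0 ∧
      1 ≤ inter L F ∧ inter L F ≤ (p : ℤ) + 2 := by
  intro hnp
  have hg : gon ≤ (p : ℤ) + 2 := by
    have : ¬ ((p : ℤ) < Cliff) := fun h => hnp (hGreen.mpr h)
    omega
  obtain ⟨F, hF1, hF2, hF3, hF4⟩ := hSerrano hg
  exact ⟨F, hF1, hF2, hF4, by omega⟩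
end
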